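/- Let f : V → W be a surjective linear map of finite-dimensional real vector spaces and L ⊆ V × V* a Lagrangian subspace. Then the pushforward f_*L := {(f(v), β) ∈ W × W* : v ∈ V, β ∈ W*, (v, β∘f) ∈ L} is a Lagrangian subspace of W × W*. (Linear-algebra form of the pushforward of Dirac structures.) -/

import Mathlib

/-- A subspace `L ⊆ V × V*` is Lagrangian if it equals its orthogonal
complement with respect to the symmetric pairing
`⟨(v,α),(w,β)⟩ = α(w) + β(v)`. -/
def IsLagrangian {V : Type*} [AddCommGroup V] [Module ℝ V]
    (L : Submodule ℝ (V × Module.Dual ℝ V)) : Prop :=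
  ∀ x : V × Module.Dual ℝ V, x ∈ L ↔ ∀ y ∈ L, x.2 y.1 + y.2 x.1 = 0

/-!
Isotropy of `f_*L` is inherited from `L`. For coisotropy, let `(w, β)` pair to zero with `f_*L`
and pick `v₀` with `f v₀ = w`; we look for `v = v₀ - k` with `k ∈ ker f` and `(v, β ∘ f) ∈ L`,
i.e. for `k` with `α k = β (f u) + α v₀` for all `(u, α) ∈ L`. By duality in the finite-dimensional
space `ker f`, such a `k` exists as soon as the right-hand side vanishes whenever `α` vanishes on
`ker f`. Such an `α` is `β' ∘ f` for some `β' ∈ W*`, so `(f u, β') ∈ f_*L`, and the right-hand side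
is the pairing of `(w, β)` with `(f u, β')`.
-/

open Module LinearMap

namespace LinearMap

variable {K V₁ V₂ : Type*} [Field K] [AddCommGroup V₁] [Module K V₁]
  [AddCommGroup V₂] [Module K V₂]

theorem exists_dual_comp_eq_of_ker_le {f : V₁ →ₗ[K] V₂} {φ : Dual K V₁}
    (h : ker f ≤ ker φ) : ∃ ψ : Dual K V₂, ψ ∘ₗ f = φ := by
  obtain ⟨ψ, rfl⟩ : φ ∈ range f.dualMap := by
    rw [range_dualMap_eq_dualAnnihilator_ker, Submodule.mem_dualAnnihilator]
    exact fun v hv => h hv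
  exact ⟨ψ, rfl⟩

theorem exists_apply_eq_of_ker_le_ker [IsReflexive K V₂] (r : V₁ →ₗ[K] Dual K V₂)
    {φ : Dual K V₁} (h : ker r ≤ ker φ) : ∃ k : V₂, ∀ z, r z k = φ z := by
  obtain ⟨g, rfl⟩ := exists_dual_comp_eq_of_ker_le h
  exact ⟨(evalEquiv K V₂).symm g, fun z => apply_evalEquiv_symm_apply K V₂ (r z) g⟩

end LinearMap

namespace IsLagrangian

variable {V W : Type*} [AddCommGroup V] [Module ℝ V] [AddCommGroup W] [Module ℝ W]
  {L : Submodule ℝ (V × Dual ℝ V)}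

theorem pairing_eq_zero (hL : IsLagrangian L) {x y : V × Dual ℝ V} (hx : x ∈ L) (hy : y ∈ L) :
    x.2 y.1 + y.2 x.1 = 0 :=
  (hL x).mp hx y hy

theorem pushforward_pairing_eq_zero (hL : IsLagrangian L) (f : V →ₗ[ℝ] W)
    {x y : W × Dual ℝ W} (hx : ∃ v : V, f v = x.1 ∧ (v, x.2 ∘ₗ f) ∈ L)
    (hy : ∃ v : V, f v = y.1 ∧ (v, y.2 ∘ₗ f) ∈ L) :
    x.2 y.1 + y.2 x.1 = 0 := by
  obtain ⟨v, hv, hvL⟩ := hx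
  obtain ⟨u, hu, huL⟩ := hy
  rw [← hv, ← hu]
  exact hL.pairing_eq_zero hvL huL

theorem exists_mem_of_pushforward_pairing_eq_zero [FiniteDimensional ℝ V] (hL : IsLagrangian L)
    {f : V →ₗ[ℝ] W} (hf : Function.Surjective f) (x : W × Dual ℝ W)
    (hx : ∀ y : W × Dual ℝ W, (∃ v : V, f v = y.1 ∧ (v, y.2 ∘ₗ f) ∈ L) →
      x.2 y.1 + y.2 x.1 = 0) :
    ∃ v : V, f v = x.1 ∧ (v, x.2 ∘ₗ f) ∈ L := by
  obtain ⟨v₀, hv₀⟩ := hf x.1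
  let r : L →ₗ[ℝ] Dual ℝ (ker f) := (ker f).subtype.dualMap ∘ₗ snd ℝ V _ ∘ₗ L.subtype
  let φ : Dual ℝ L :=
    (x.2 ∘ₗ f ∘ₗ fst ℝ V (Dual ℝ V) + Dual.eval ℝ V v₀ ∘ₗ snd ℝ V (Dual ℝ V)) ∘ₗ L.subtype
  obtain ⟨k, hk⟩ : ∃ k : ker f, ∀ z, r z k = φ z := by
    refine exists_apply_eq_of_ker_le_ker (V₁ := L) r ?_
    rintro ⟨⟨u, α⟩, hz⟩ hr
    have hα : ker f ≤ ker α := fun k hk => congr($hr ⟨k, hk⟩)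
    obtain ⟨β, rfl⟩ := exists_dual_comp_eq_of_ker_le hα
    have hpair := hx (f u, β) ⟨u, rfl, hz⟩
    rwa [← hv₀] at hpair
  refine ⟨v₀ - k, by simp [hv₀], (hL _).mpr fun ⟨u, α⟩ hz => ?_⟩
  have hkz : α k = x.2 (f u) + α v₀ := hk ⟨(u, α), hz⟩
  simp only [comp_apply, map_sub, hkz]
  ring

end IsLagrangian

theorem pushforward_of_lagrangian_is_lagrangian
    {V W : Type*} [AddCommGroup V] [Module ℝ V] [FiniteDimensional ℝ V]
    [AddCommGroup W] [Module ℝ W]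
    (f : V →ₗ[ℝ] W) (hf : Function.Surjective f)
    (L : Submodule ℝ (V × Module.Dual ℝ V)) (hL : IsLagrangian L) :
    ∀ x : W × Module.Dual ℝ W,
      (∃ v : V, f v = x.1 ∧ (v, x.2 ∘ₗ f) ∈ L) ↔
      ∀ y : W × Module.Dual ℝ W,
        (∃ v : V, f v = y.1 ∧ (v, y.2 ∘ₗ f) ∈ L) →
        x.2 y.1 + y.2 x.1 = 0 :=
  fun x => ⟨fun hx _ hy => hL.pushforward_pairing_eq_zero f hx hy,
    hL.exists_mem_of_pushforward_pairing_eq_zero hf x⟩
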